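/- arXiv:1801.06973 — 3 statements merged into one kernel-verified Lean document; each statement's English description precedes it below -/
import Mathlib

section
/- Let α > 0, h > 0, and let i, j be natural numbers. Let T_i be the i-th right-handed triangular function of step h. Then the Riemann–Liouville fractional integral of order α of T_i evaluated at the grid node t = j·h satisfies: J^α T_i(j·h) = (h^α / Γ(α+2)) · (k^{α+1} − (k−1)^α · (k+α)) with k = j − i, whenever j ≥ i+1; and J^α T_i(j·h) = 0 whenever j ≤ i. (These are exactly the entries φ_k of the generalized one-shot operational matrix P_{αts} of Theorem 3.2.) -/
open MeasureTheory Real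

/-- The `i`-th sample-and-hold function (SHF) of step `h`:
`S_i(t) = 1` on `[i·h, (i+1)·h)` and `0` otherwise. -/
noncomputable def shf (h : ℝ) (i : ℕ) (t : ℝ) : ℝ :=
  if (i : ℝ) * h ≤ t ∧ t < ((i : ℝ) + 1) * h then 1 else 0

/-- The `i`-th right-handed triangular function (TF) of step `h`:
`T_i(t) = (t − i·h)/h` on `[i·h, (i+1)·h)` and `0` otherwise. -/
noncomputable def tf (h : ℝ) (i : ℕ) (t : ℝ) : ℝ :=
  if (i : ℝ) * h ≤ t ∧ t < ((i : ℝ) + 1) * h then (t - (i : ℝ) * h) / h else 0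

/-- Riemann–Liouville fractional integral of order `α`:
`J^α f(t) = (1/Γ(α)) ∫₀ᵗ (t − τ)^{α−1} f(τ) dτ`. -/
noncomputable def rlInt (α : ℝ) (f : ℝ → ℝ) (t : ℝ) : ℝ :=
  (1 / Real.Gamma α) * ∫ τ in (0:ℝ)..t, (t - τ) ^ (α - 1) * f τ

/-!
The integrand `(T - τ)^(α-1) T_i(τ)` vanishes off the support `[i h, (i+1) h)` of `T_i`, and on
it `τ - i h = (T - i h) - (T - τ)`, so `J^α T_i(T)` is a combination of the two elementary
integrals `∫ (T - τ)^(α-1)` and `∫ (T - τ)^α`. At the node `T = j h` one has `T - i h = k h`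
and `T - (i+1) h = (k-1) h`, and `Γ(α + 2) = α (α + 1) Γ(α)` absorbs the denominators.
-/

open Set

theorem intervalIntegral_indicator_Ico {E : Type*} [NormedAddCommGroup E] [NormedSpace ℝ E]
    {μ : Measure ℝ} [NullSingletonClass μ] {f : ℝ → E} {c a b T : ℝ} (hca : c ≤ a) (hab : a ≤ b)
    (hbT : b ≤ T) : ∫ x in c..T, (Ico a b).indicator f x ∂μ = ∫ x in a..b, f x ∂μ := by
  have hS : (Ioc c T ∩ Ico a b : Set ℝ) =ᵐ[μ] Ioc a b := by
    refine (Ioc_ae_eq_Icc.inter (ae_eq_refl _)).trans ?_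
    rw [inter_eq_right.2 (Ico_subset_Icc_self.trans (Icc_subset_Icc hca hbT))]
    exact Ico_ae_eq_Ioc
  rw [intervalIntegral.integral_of_le (hca.trans (hab.trans hbT)),
    setIntegral_indicator measurableSet_Ico, setIntegral_congr_set hS,
    intervalIntegral.integral_of_le hab]

theorem intervalIntegrable_sub_rpow {p : ℝ} (hp : -1 < p) (T a b : ℝ) :
    IntervalIntegrable (fun x => (T - x) ^ p) volume a b := by
  simpa using
    (intervalIntegral.intervalIntegrable_rpow' (a := T - a) (b := T - b) hp).comp_sub_left T

theorem integral_sub_rpow {p : ℝ} (hp : -1 < p) (T a b : ℝ) :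
    ∫ x in a..b, (T - x) ^ p = ((T - a) ^ (p + 1) - (T - b) ^ (p + 1)) / (p + 1) := by
  rw [intervalIntegral.integral_comp_sub_left (fun x => x ^ p) T]
  exact integral_rpow (Or.inl hp)

theorem integral_sub_rpow_sub_one_mul_sub {α a b T : ℝ} (hα : 0 < α) (hab : a ≤ b)
    (hbT : b ≤ T) :
    ∫ x in a..b, (T - x) ^ (α - 1) * (x - a) =
      ((T - a) ^ (α + 1) - (T - b) ^ α * (T - a + α * (b - a))) / (α * (α + 1)) := by
  have hsplit : EqOn (fun x => (T - x) ^ (α - 1) * (x - a))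
      (fun x => (T - a) * (T - x) ^ (α - 1) - (T - x) ^ α) (uIcc a b) := by
    intro x hx
    rw [uIcc_of_le hab] at hx
    have hpow := rpow_add_one' (x := T - x) (y := α - 1) (by linarith [hx.2]) (by simp [hα.ne'])
    rw [sub_add_cancel] at hpow
    simp only [hpow]
    ring
  rw [intervalIntegral.integral_congr hsplit, intervalIntegral.integral_sub
      ((intervalIntegrable_sub_rpow (by linarith) T a b).const_mul _)
      (intervalIntegrable_sub_rpow (by linarith) T a b),
    intervalIntegral.integral_const_mul, integral_sub_rpow (by linarith),
    integral_sub_rpow (by linarith), sub_add_cancel,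
    rpow_add_one' (by linarith) (by linarith), rpow_add_one' (by linarith) (by linarith)]
  field_simp
  ring

theorem tf_eq_indicator (h : ℝ) (i : ℕ) :
    tf h i = (Ico ((i : ℝ) * h) ((i + 1) * h)).indicator (fun t => (t - i * h) / h) := by
  ext t
  simp only [tf, indicator_apply, mem_Ico]

theorem tf_eq_zero_of_le {h t : ℝ} {i : ℕ} (ht : t ≤ i * h) : tf h i t = 0 := by
  rw [tf_eq_indicator, indicator_apply]
  split_ifs with hmem
  · rw [le_antisymm ht hmem.1, sub_self, zero_div]
  · rfl

theorem rlInt_tf_eq_zero_of_le {α T : ℝ} (h : ℝ) (i : ℕ) (hT₀ : 0 ≤ T) (hT : T ≤ i * h) :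
    rlInt α (tf h i) T = 0 := by
  have hzero : EqOn (fun τ => (T - τ) ^ (α - 1) * tf h i τ) (fun _ => 0) (uIcc 0 T) := by
    intro τ hτ
    rw [uIcc_of_le hT₀] at hτ
    simp [tf_eq_zero_of_le (hτ.2.trans hT)]
  rw [rlInt, intervalIntegral.integral_congr hzero, intervalIntegral.integral_zero, mul_zero]

theorem rlInt_tf_of_succ_mul_le {α h T : ℝ} (hα : 0 < α) (hh : 0 < h) (i : ℕ)
    (hT : (i + 1) * h ≤ T) :
    rlInt α (tf h i) T =
      ((T - i * h) ^ (α + 1) - (T - (i + 1) * h) ^ α * (T - i * h + α * h)) /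
        (h * Gamma (α + 2)) := by
  have hΓ : Gamma (α + 2) = (α + 1) * α * Gamma α := by
    rw [show α + 2 = α + 1 + 1 by ring, Gamma_add_one (by positivity), Gamma_add_one hα.ne',
      mul_assoc]
  have hi : (0 : ℝ) ≤ i * h := by positivity
  simp_rw [rlInt, tf_eq_indicator, ← indicator_mul_right _ (fun τ => (T - τ) ^ (α - 1)),
    mul_div_assoc']
  rw [intervalIntegral_indicator_Ico hi (by nlinarith) hT, intervalIntegral.integral_div,
    integral_sub_rpow_sub_one_mul_sub hα (by nlinarith) hT, hΓ]
  have hΓpos := Gamma_pos_of_pos hα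
  field_simp
  ring

/-- Nodal values of `J^α T_i`: the entries `φ_k` of the operational matrix `P_{αts}`. -/
theorem rlInt_tf_node (α h : ℝ) (hα : 0 < α) (hh : 0 < h) (i j : ℕ) :
    (∀ k : ℕ, k = j - i → i + 1 ≤ j →
      rlInt α (tf h i) ((j : ℝ) * h) =
        h ^ α / Real.Gamma (α + 2) *
          ((k : ℝ) ^ (α + 1) - ((k : ℝ) - 1) ^ α * ((k : ℝ) + α))) ∧
    (j ≤ i → rlInt α (tf h i) ((j : ℝ) * h) = 0) := by
  constructor
  · intro k hk hij
    have hkji : (k : ℝ) = j - i := by rw [hk, Nat.cast_sub (by omega)]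
    have hk1 : (1 : ℝ) ≤ k := by exact_mod_cast (by omega : 1 ≤ k)
    have hT : ((i : ℝ) + 1) * h ≤ j * h := by gcongr; exact_mod_cast hij
    rw [rlInt_tf_of_succ_mul_le hα hh i hT,
      show (j : ℝ) * h - i * h = k * h by rw [hkji]; ring,
      show (j : ℝ) * h - (i + 1) * h = (k - 1) * h by rw [hkji]; ring,
      mul_rpow (by positivity) hh.le, mul_rpow (by linarith) hh.le, rpow_add_one hh.ne']
    have hΓpos := Gamma_pos_of_pos (show 0 < α + 2 by linarith)
    field_simp
  · intro hji
    exact rlInt_tf_eq_zero_of_le h i (by positivity) (by gcongr)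
end

section
/- Let α > 0 and h > 0. Then the Riemann–Liouville fractional integral of order α of the 0-th right-handed triangular function T_0 of step h satisfies, for every integer j ≥ 1, J^α T_0(j·h) = (h^α/Γ(α+2))·(j^{α+1} − (j−1)^α·(j+α)), and J^α T_0(0) = 0. (This is formula (A20) in the proof of Theorem 3.2.) -/
open MeasureTheory Real

/-! For `t ≥ h` the triangular function `T₀` equals `τ / h` on `[0, h)` and vanishes on `[h, t]`,
so `J^α T₀(t)` is `(1 / (h Γ(α))) ∫₀ʰ (t − τ)^{α−1} τ dτ`. Writing `τ = t − (t − τ)` turns this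
into two integrals of powers of `t − τ`, and `Γ(α + 2) = (α + 1) α Γ(α)` collects the result. -/

theorem Real.rpow_add_one_eq_mul_self {y : ℝ} (hy : y + 1 ≠ 0) (x : ℝ) :
    x ^ (y + 1) = x ^ y * x := by
  rcases eq_or_ne x 0 with rfl | hx
  · simp [zero_rpow hy]
  · exact rpow_add_one hx y

theorem intervalIntegral.integral_indicator_Ico {f : ℝ → ℝ} {a b c : ℝ} (hab : a ≤ b)
    (hbc : b ≤ c) : ∫ x in a..c, (Set.Ico a b).indicator f x = ∫ x in a..b, f x := by
  rw [intervalIntegral.integral_of_le (hab.trans hbc), intervalIntegral.integral_of_le hab,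
    setIntegral_indicator measurableSet_Ico]
  have hinter : Set.Ioc a c ∩ Set.Ico a b = Set.Ioo a b := by
    ext x; simp only [Set.mem_inter_iff, Set.mem_Ioc, Set.mem_Ico, Set.mem_Ioo]; grind
  rw [hinter]
  exact setIntegral_congr_set Ioo_ae_eq_Ioc

theorem tf_zero_eq_indicator (h : ℝ) : tf h 0 = (Set.Ico 0 h).indicator (· / h) := by
  ext τ
  simp [tf, Set.indicator, Set.mem_Ico]

theorem integral_sub_rpow_sub_one_mul {α : ℝ} (hα : 0 < α) (t a b : ℝ) :
    ∫ τ in a..b, (t - τ) ^ (α - 1) * τ =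
      t * ((t - a) ^ α - (t - b) ^ α) / α - ((t - a) ^ (α + 1) - (t - b) ^ (α + 1)) / (α + 1) := by
  have hpow : ∀ u : ℝ, u ^ α = u ^ (α - 1) * u := fun u => by
    simpa using Real.rpow_add_one_eq_mul_self (y := α - 1) (by linarith) u
  have hint : ∀ p : ℝ, -1 < p → IntervalIntegrable (fun u : ℝ => u ^ p) volume (t - b) (t - a) :=
    fun p hp => intervalIntegral.intervalIntegrable_rpow' hp
  calc ∫ τ in a..b, (t - τ) ^ (α - 1) * τ
      = ∫ u in t - b..t - a, u ^ (α - 1) * (t - u) := by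
        simpa using intervalIntegral.integral_comp_sub_left (fun u => u ^ (α - 1) * (t - u)) t
    _ = ∫ u in t - b..t - a, (t * u ^ (α - 1) - u ^ α) := by
        congr 1; ext u; rw [hpow]; ring
    _ = _ := by
        rw [intervalIntegral.integral_sub ((hint _ (by linarith)).const_mul t) (hint _ (by linarith)),
          intervalIntegral.integral_const_mul, integral_rpow (Or.inl (by linarith)),
          integral_rpow (Or.inl (by linarith)), sub_add_cancel]
        ring

theorem rlInt_tf_zero_of_le {α h t : ℝ} (hα : 0 < α) (hh : 0 < h) (hht : h ≤ t) :
    rlInt α (tf h 0) t = (t ^ (α + 1) - (t - h) ^ α * (t + α * h)) / (h * Gamma (α + 2)) := by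
  have hΓ : Gamma (α + 2) = (α + 1) * α * Gamma α := by
    rw [show α + 2 = α + 1 + 1 by ring, Gamma_add_one (by linarith), Gamma_add_one hα.ne']
    ring
  have hpow : ∀ u : ℝ, u ^ (α + 1) = u ^ α * u :=
    Real.rpow_add_one_eq_mul_self (by linarith)
  have hint : ∫ τ in (0 : ℝ)..t, (t - τ) ^ (α - 1) * tf h 0 τ
      = (∫ τ in (0 : ℝ)..h, (t - τ) ^ (α - 1) * τ) / h := by
    have hind : (fun τ => (t - τ) ^ (α - 1) * tf h 0 τ)
        = (Set.Ico 0 h).indicator (fun τ => (t - τ) ^ (α - 1) * τ / h) := by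
      ext τ
      simp only [tf_zero_eq_indicator, mul_div_assoc, Set.indicator_mul_right]
    rw [hind, intervalIntegral.integral_indicator_Ico hh.le hht, intervalIntegral.integral_div]
  rw [rlInt, hint, integral_sub_rpow_sub_one_mul hα, hΓ, sub_zero]
  simp only [hpow]
  have hΓα : Gamma α ≠ 0 := (Gamma_pos_of_pos hα).ne'
  field_simp
  ring

/-- Formula (A20): nodal values of the fractional integral of the `0`-th TF. -/
theorem rlInt_tf_zero_node (α h : ℝ) (hα : 0 < α) (hh : 0 < h) :
    (∀ j : ℕ, 1 ≤ j →
      rlInt α (tf h 0) ((j : ℝ) * h) =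
        h ^ α / Real.Gamma (α + 2) *
          ((j : ℝ) ^ (α + 1) - ((j : ℝ) - 1) ^ α * ((j : ℝ) + α))) ∧
    rlInt α (tf h 0) 0 = 0 := by
  refine ⟨fun j hj => ?_, by simp [rlInt]⟩
  have hj : (1 : ℝ) ≤ j := by exact_mod_cast hj
  rw [rlInt_tf_zero_of_le hα hh (by nlinarith), show (j : ℝ) * h - h = (j - 1) * h by ring,
    mul_rpow (by linarith) hh.le, mul_rpow (by linarith) hh.le,
    Real.rpow_add_one_eq_mul_self (by linarith) h]
  field_simp
end

section
/- Let α > 0, h > 0, m a positive integer, and let c_0, …, c_{m−1} be real numbers. Let f = Σ_{i=0}^{m−1} c_i·S_i be the step function of step h with values c_i on the subintervals [i·h, (i+1)·h), extended by 0 beyond m·h. Then for every integer j with 1 ≤ j ≤ m, J^α f(j·h) = (h^α/Γ(α+1)) · Σ_{i=0}^{j−1} c_i · ((j−i)^α − (j−i−1)^α). In particular, the vector of nodal values (J^α f(j·h))_{j} equals the vector of coefficients c multiplied by the one-shot operational matrix P_{αss} = (h^α/Γ(α+1))·⟦0 ς_1 … ς_{m−1}⟧ with ς_k = k^α − (k−1)^α.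 -/
open MeasureTheory Real

/-- The upper-triangular Toeplitz matrix `⟦a_0 a_1 … a_{m−1}⟧` whose `(i,j)` entry is
`a_{j−i}` for `j ≥ i` and `0` for `j < i`. -/
def toeplitz (m : ℕ) (a : ℕ → ℝ) : Matrix (Fin m) (Fin m) ℝ :=
  fun i j => if (i : ℕ) ≤ (j : ℕ) then a ((j : ℕ) - (i : ℕ)) else 0

/-! On each cell `[k h, (k+1) h)` the step function is the constant `c k`, so `J^α f (j h)` splits
into `j` integrals of the kernel `(j h - τ)^(α-1)`, each given by the power rule as
`h^α ((j-k)^α - (j-k-1)^α) / α`; then `α Γ(α) = Γ(α+1)`. Row `j` of the Toeplitz matrix carries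
the same weights, its diagonal entry `ς_0 = 0` removing the term `i = j`. -/

theorem shf_eq_ite_of_mem_Ico {h τ : ℝ} (hh : 0 ≤ h) {k : ℕ}
    (hτ : τ ∈ Set.Ico ((k : ℝ) * h) ((k + 1) * h)) (i : ℕ) :
    shf h i τ = if i = k then 1 else 0 := by
  rcases eq_or_ne i k with rfl | hik
  · simp [shf, hτ.1, hτ.2]
  · have hdisj : ¬((i : ℝ) * h ≤ τ ∧ τ < ((i : ℝ) + 1) * h) := by
      rintro ⟨hi₁, hi₂⟩
      rcases hik.lt_or_gt with hlt | hgt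
      · have : ((i : ℝ) + 1) * h ≤ k * h := by gcongr; exact_mod_cast hlt
        linarith [hτ.1]
      · have : ((k : ℝ) + 1) * h ≤ i * h := by gcongr; exact_mod_cast hgt
        linarith [hτ.2]
    simp [shf, hdisj, hik]

theorem sum_mul_shf_of_mem_Ico {h τ : ℝ} (hh : 0 ≤ h) {m k : ℕ} (hk : k < m) (c : ℕ → ℝ)
    (hτ : τ ∈ Set.Ico ((k : ℝ) * h) ((k + 1) * h)) :
    ∑ i ∈ Finset.range m, c i * shf h i τ = c k := by
  simp [shf_eq_ite_of_mem_Ico hh hτ, hk]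

section RiemannLiouvilleKernel

variable {α : ℝ} (T : ℝ) {a b : ℝ}

theorem intervalIntegrable_sub_rpow_sub_one (hα : 0 < α) :
    IntervalIntegrable (fun τ => (T - τ) ^ (α - 1)) volume a b := by
  simpa using (intervalIntegral.intervalIntegrable_rpow' (a := T - a) (b := T - b)
    (by linarith : (-1 : ℝ) < α - 1)).comp_sub_left T

theorem integral_sub_rpow_sub_one (hα : 0 < α) :
    ∫ τ in a..b, (T - τ) ^ (α - 1) = ((T - a) ^ α - (T - b) ^ α) / α := by
  rw [intervalIntegral.integral_comp_sub_left (fun x => x ^ (α - 1)) T,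
    integral_rpow (Or.inl (by linarith)), sub_add_cancel]

variable {f : ℝ → ℝ} {c : ℝ}

theorem intervalIntegrable_sub_rpow_mul_of_eqOn (hα : 0 < α)
    (hf : Set.EqOn f (fun _ => c) (Set.uIoo a b)) :
    IntervalIntegrable (fun τ => (T - τ) ^ (α - 1) * f τ) volume a b :=
  ((intervalIntegrable_sub_rpow_sub_one T hα).mul_const c).congr_uIoo
    fun τ hτ => by simp [hf hτ]

theorem integral_sub_rpow_mul_of_eqOn (hα : 0 < α)
    (hf : Set.EqOn f (fun _ => c) (Set.uIoo a b)) :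
    ∫ τ in a..b, (T - τ) ^ (α - 1) * f τ = c * (((T - a) ^ α - (T - b) ^ α) / α) := by
  rw [intervalIntegral.integral_congr_uIoo (g := fun τ => (T - τ) ^ (α - 1) * c)
      fun τ hτ => by simp [hf hτ],
    intervalIntegral.integral_mul_const, integral_sub_rpow_sub_one T hα, mul_comm]

end RiemannLiouvilleKernel

theorem rlInt_natCast_mul_of_eq_sum_shf {α h : ℝ} (hα : 0 < α) (hh : 0 ≤ h) {m : ℕ} (c : ℕ → ℝ)
    {f : ℝ → ℝ} (hf : ∀ t, f t = ∑ i ∈ Finset.range m, c i * shf h i t) {j : ℕ} (hj : j ≤ m) :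
    rlInt α f (j * h) = h ^ α / Real.Gamma (α + 1) *
      ∑ i ∈ Finset.range j, c i * (((j : ℝ) - i) ^ α - ((j : ℝ) - i - 1) ^ α) := by
  have hf_piece : ∀ k < j,
      Set.EqOn f (fun _ => c k) (Set.uIoo ((k : ℝ) * h) ((k + 1 : ℕ) * h)) := by
    intro k hk τ hτ
    rw [Set.uIoo_of_le (by gcongr; simp), Nat.cast_succ] at hτ
    rw [hf, sum_mul_shf_of_mem_Ico hh (hk.trans_le hj) c (Set.Ioo_subset_Ico_self hτ)]
  have hpiece : ∀ k ∈ Finset.range j,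
      ∫ τ in (k : ℝ) * h..((k + 1 : ℕ) : ℝ) * h, ((j : ℝ) * h - τ) ^ (α - 1) * f τ =
        h ^ α / α * (c k * (((j : ℝ) - k) ^ α - ((j : ℝ) - k - 1) ^ α)) := by
    intro k hk
    have hkj : (k : ℝ) + 1 ≤ j := by exact_mod_cast Finset.mem_range.mp hk
    rw [integral_sub_rpow_mul_of_eqOn _ hα (hf_piece k (Finset.mem_range.mp hk)), Nat.cast_succ,
      ← sub_mul, show (j : ℝ) * h - (k + 1) * h = ((j : ℝ) - k - 1) * h by ring,
      Real.mul_rpow (by linarith) hh, Real.mul_rpow (by linarith) hh]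
    ring
  have hsplit := intervalIntegral.sum_integral_adjacent_intervals (a := fun k : ℕ => (k : ℝ) * h)
    fun k hk => intervalIntegrable_sub_rpow_mul_of_eqOn (j * h) hα (hf_piece k hk)
  rw [Nat.cast_zero, zero_mul] at hsplit
  rw [rlInt, ← hsplit, Finset.sum_congr rfl hpiece, ← Finset.mul_sum, Real.Gamma_add_one hα.ne']
  field_simp

theorem vecMul_toeplitz_apply {m : ℕ} (v a : ℕ → ℝ) (j : Fin m) :
    Matrix.vecMul (fun i : Fin m => v i) (toeplitz m a) j =
      ∑ i ∈ Finset.range (j + 1), v i * a (j - i) := by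
  have hrange : (Finset.range m).filter (· ≤ (j : ℕ)) = Finset.range (j + 1) := by
    ext i; simp only [Finset.mem_filter, Finset.mem_range]; omega
  simp only [Matrix.vecMul, dotProduct, toeplitz, mul_ite, mul_zero]
  rw [Fin.sum_univ_eq_sum_range (fun i => if i ≤ (j : ℕ) then v i * a (j - i) else 0),
    ← Finset.sum_filter, hrange]

theorem sum_range_succ_mul_rpow_sub_rpow (α : ℝ) (v : ℕ → ℝ) (j : ℕ) :
    ∑ i ∈ Finset.range (j + 1),
        v i * (if j - i = 0 then 0 else ((j - i : ℕ) : ℝ) ^ α - ((j - i : ℕ) - 1 : ℝ) ^ α) =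
      ∑ i ∈ Finset.range j, v i * (((j : ℝ) - i) ^ α - ((j : ℝ) - i - 1) ^ α) := by
  rw [Finset.sum_range_succ, Nat.sub_self, if_pos rfl, mul_zero, add_zero]
  refine Finset.sum_congr rfl fun i hi => ?_
  have hij := Finset.mem_range.mp hi
  rw [if_neg (Nat.sub_ne_zero_of_lt hij), Nat.cast_sub hij.le]

theorem rlInt_step_node_general (α h : ℝ) (hα : 0 < α) (hh : 0 < h) (m : ℕ)
    (c : ℕ → ℝ) (f : ℝ → ℝ)
    (hf : ∀ t : ℝ, f t = ∑ i ∈ Finset.range m, c i * shf h i t) :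
    (∀ j : ℕ, 1 ≤ j → j ≤ m →
      rlInt α f ((j : ℝ) * h) =
        h ^ α / Real.Gamma (α + 1) *
          ∑ i ∈ Finset.range j, c i * (((j : ℝ) - i) ^ α - ((j : ℝ) - i - 1) ^ α)) ∧
    (∀ j : Fin m,
      Matrix.vecMul (fun i : Fin m => c (i : ℕ))
          ((h ^ α / Real.Gamma (α + 1)) •
            toeplitz m (fun k => if k = 0 then 0 else (k : ℝ) ^ α - ((k : ℝ) - 1) ^ α)) j =
        rlInt α f (((j : ℕ) : ℝ) * h)) := by
  refine ⟨fun j _ hj => rlInt_natCast_mul_of_eq_sum_shf hα hh.le c hf hj, fun j => ?_⟩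
  rw [Matrix.vecMul_smul, Pi.smul_apply, vecMul_toeplitz_apply, sum_range_succ_mul_rpow_sub_rpow,
    rlInt_natCast_mul_of_eq_sum_shf hα hh.le c hf j.isLt.le, smul_eq_mul]

/-- Nodal values of the fractional integral of a step function
`f = Σ_{i<m} c_i·S_i`, and the resulting matrix form: the vector of nodal values
equals the coefficient vector multiplied by the one-shot matrix `P_{αss}`. -/
theorem rlInt_step_node (α h : ℝ) (hα : 0 < α) (hh : 0 < h) (m : ℕ) (hm : 0 < m)
    (c : ℕ → ℝ) (f : ℝ → ℝ)
    (hf : ∀ t : ℝ, f t = ∑ i ∈ Finset.range m, c i * shf h i t) :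
    (∀ j : ℕ, 1 ≤ j → j ≤ m →
      rlInt α f ((j : ℝ) * h) =
        h ^ α / Real.Gamma (α + 1) *
          ∑ i ∈ Finset.range j, c i * (((j : ℝ) - i) ^ α - ((j : ℝ) - i - 1) ^ α)) ∧
    (∀ j : Fin m,
      Matrix.vecMul (fun i : Fin m => c (i : ℕ))
          ((h ^ α / Real.Gamma (α + 1)) •
            toeplitz m (fun k => if k = 0 then 0 else (k : ℝ) ^ α - ((k : ℝ) - 1) ^ α)) j =
        rlInt α f (((j : ℕ) : ℝ) * h)) :=
  rlInt_step_node_general α h hα hh m c f hf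
end
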